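/- Let A be a trace-class-valued random variable such that A(ω) ≥ 0 and √A(ω) is trace class for all ω, and such that the Bochner integrals exist. Then E[√A] ≤ √(E[A]) in the Loewner order. -/

import Mathlib

/-!
Write `S = E[√A]`. The variance `E[(√A - S)²]` is a positive operator, and expanding it gives
`E[A] - S²`; so `S² ≤ E[A]`, and operator monotonicity of the square root turns this into
`S = √(S²) ≤ √(E[A])`.
-/

open scoped InnerProductSpace Topology
open MeasureTheory Filter ContinuousLinearMap

noncomputable section

variable {H : Type*} [NormedAddCommGroup H] [InnerProductSpace ℂ H] [CompleteSpace H]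

/-- The absolute value `|A| = sqrt (A† A)` of a bounded operator. -/
noncomputable def absOp (A : H →L[ℂ] H) : H →L[ℂ] H :=
  CFC.sqrt (ContinuousLinearMap.adjoint A * A)

/-- A fixed Hilbert basis of `H`. -/
noncomputable def hb (H : Type*) [NormedAddCommGroup H] [InnerProductSpace ℂ H]
    [CompleteSpace H] : HilbertBasis (exists_hilbertBasis ℂ H).choose ℂ H :=
  (exists_hilbertBasis ℂ H).choose_spec.choose

/-- The trace of an operator, computed along the fixed Hilbert basis. -/
noncomputable def traceCLM (A : H →L[ℂ] H) : ℂ :=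
  ∑' i, ⟪(hb H) i, A ((hb H) i)⟫_ℂ

/-- `A` is trace class iff the diagonal of `|A|` is summable. -/
def IsTraceClass (A : H →L[ℂ] H) : Prop :=
  Summable fun i => (⟪(hb H) i, absOp A ((hb H) i)⟫_ℂ).re

/-- The trace norm `‖A‖₁ = Tr |A|`. -/
noncomputable def traceNorm (A : H →L[ℂ] H) : ℝ :=
  ∑' i, (⟪(hb H) i, absOp A ((hb H) i)⟫_ℂ).re

theorem integral_mul_integral_le_integral_mul_self {Ω : Type*} [MeasurableSpace Ω]
    {μ : Measure Ω} [IsProbabilityMeasure μ] {A : Type*} [CStarAlgebra A] [PartialOrder A]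
    [StarOrderedRing A] {f : Ω → A} (hsa : ∀ ω, IsSelfAdjoint (f ω)) (hf : Integrable f μ)
    (hff : Integrable (fun ω ↦ f ω * f ω) μ) :
    (∫ ω, f ω ∂μ) * ∫ ω, f ω ∂μ ≤ ∫ ω, f ω * f ω ∂μ := by
  set S := ∫ ω, f ω ∂μ
  have hfS : Integrable (fun ω ↦ f ω * S) μ := hf.mul_const S
  have hSf : Integrable (fun ω ↦ star S * f ω) μ := hf.const_mul (star S)
  have variance_eq : ∫ ω, star (f ω - S) * (f ω - S) ∂μ = ∫ ω, f ω * f ω ∂μ - S * S := by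
    have expand : ∀ ω, star (f ω - S) * (f ω - S)
        = f ω * f ω - f ω * S - star S * f ω + star S * S := fun ω ↦ by
      rw [star_sub, (hsa ω).star_eq]; noncomm_ring
    simp_rw [expand]
    rw [integral_add (f := fun ω ↦ f ω * f ω - f ω * S - star S * f ω) ((hff.sub hfS).sub hSf)
        (integrable_const _), integral_sub (f := fun ω ↦ f ω * f ω - f ω * S) (hff.sub hfS) hSf,
      integral_sub hff hfS, integral_const, probReal_univ, one_smul,
      integral_mul_const_of_integrable hf, integral_const_mul_of_integrable hf]
    abel
  rw [← sub_nonneg, ← variance_eq]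
  exact integral_nonneg fun ω ↦ star_mul_self_nonneg _

theorem sqrt_expectation_jensen_general
    {Ω : Type*} [MeasurableSpace Ω] (μ : Measure Ω) [IsProbabilityMeasure μ]
    (A : Ω → (H →L[ℂ] H))
    (hpos : ∀ ω, (A ω).IsPositive)
    (hint : Integrable A μ)
    (hint_sqrt : Integrable (fun ω => CFC.sqrt (A ω)) μ) :
    (CFC.sqrt (∫ ω, A ω ∂μ) - ∫ ω, CFC.sqrt (A ω) ∂μ).IsPositive := by
  have sqrt_mul_sqrt : ∀ ω, CFC.sqrt (A ω) * CFC.sqrt (A ω) = A ω := fun ω ↦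
    CFC.sqrt_mul_sqrt_self _ ((nonneg_iff_isPositive _).2 (hpos ω))
  have sq_le : (∫ ω, CFC.sqrt (A ω) ∂μ) * ∫ ω, CFC.sqrt (A ω) ∂μ ≤ ∫ ω, A ω ∂μ := by
    simpa only [sqrt_mul_sqrt] using integral_mul_integral_le_integral_mul_self
      (fun ω ↦ (CFC.sqrt_nonneg (A ω)).isSelfAdjoint) hint_sqrt
      (by simpa only [sqrt_mul_sqrt] using hint)
  have integral_sqrt_nonneg : 0 ≤ ∫ ω, CFC.sqrt (A ω) ∂μ :=
    integral_nonneg fun ω ↦ CFC.sqrt_nonneg _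
  rw [← nonneg_iff_isPositive, sub_nonneg, ← CFC.sqrt_mul_self _ integral_sqrt_nonneg]
  exact CFC.sqrt_le_sqrt _ _ sq_le

/-- operator Jensen inequality for the square root:
`E[√A] ≤ √(E[A])` in the Loewner order. -/
theorem sqrt_expectation_jensen [TopologicalSpace.SeparableSpace H]
    {Ω : Type*} [MeasurableSpace Ω] (μ : Measure Ω) [IsProbabilityMeasure μ]
    (A : Ω → (H →L[ℂ] H))
    (hpos : ∀ ω, (A ω).IsPositive)
    (htc : ∀ ω, IsTraceClass (A ω))
    (hsqrt_tc : ∀ ω, IsTraceClass (CFC.sqrt (A ω)))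
    (hint : Integrable A μ)
    (hint_sqrt : Integrable (fun ω => CFC.sqrt (A ω)) μ) :
    (CFC.sqrt (∫ ω, A ω ∂μ) - ∫ ω, CFC.sqrt (A ω) ∂μ).IsPositive :=
  sqrt_expectation_jensen_general μ A hpos hint hint_sqrt
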